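/- Let P be a finite poset and e ∈ P. Define t_e^* : C(P) → C(P) by t_e^* := τ_{e_1} ∘ ⋯ ∘ τ_{e_k} ∘ τ_e ∘ τ_{e_1} ∘ ⋯ ∘ τ_{e_k}, where e_1, …, e_k are the elements covered by e, and define τ_e^* : OR(P) → OR(P) by τ_e^* := η_e ∘ t_e ∘ η_e^{-1}, where η_e is the composition of the toggles t_x over a linear extension of {x ∈ P | x < e}. Then OR ∘ t_e^* = t_e ∘ OR and OR ∘ τ_e = τ_e^* ∘ OR as maps C(P) → OR(P). Consequently there is a group isomorphism from the toggle group Tog_C(P) generated by {τ_e | e ∈ P} to the toggle group Tog_OR(P) generated by {t_e | e ∈ P}, given by τ_e ↦ τ_e^*, with inverse t_e ↦ t_e^*. -/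

import Mathlib

open scoped Classical

variable {P : Type*} [PartialOrder P]

/-- Membership in the chain polytope `C(P)`: nonnegative labels whose sum along every
chain is at most 1. -/
def InChainPolytope (P : Type*) [PartialOrder P] (g : P → ℝ) : Prop :=
  (∀ x : P, 0 ≤ g x) ∧ ∀ l : List P, l.Chain' (· < ·) → (l.map g).sum ≤ 1

/-- Membership in the order-reversing polytope `OR(P)`. -/
def InORPolytope (P : Type*) [PartialOrder P] (f : P → ℝ) : Prop :=
  (∀ x : P, 0 ≤ f x ∧ f x ≤ 1) ∧ ∀ ⦃x y : P⦄, x ≤ y → f y ≤ f x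

/-- Membership in the order-preserving polytope `OP(P)`. -/
def InOPPolytope (P : Type*) [PartialOrder P] (f : P → ℝ) : Prop :=
  (∀ x : P, 0 ≤ f x ∧ f x ≤ 1) ∧ ∀ ⦃x y : P⦄, x ≤ y → f x ≤ f y

/-- The poset `P̂`, obtained from `P` by adjoining a minimum `m̂ = ⊥` and a
maximum `M̂ = ⊤`. -/
abbrev PHat (P : Type*) := WithBot (WithTop P)

/-- The inclusion of `P` into `P̂`. -/
def toHat (x : P) : PHat P := ((x : WithTop P) : PHat P)

/-- Extension of an order-reversing labeling to `P̂`, with `f(m̂) = 1`, `f(M̂) = 0`. -/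
noncomputable def hatOR (f : P → ℝ) : PHat P → ℝ := fun y =>
  WithBot.recBotCoe 1 (fun w => WithTop.recTopCoe 0 f w) y

/-- Extension of an order-preserving labeling to `P̂`, with `f(m̂) = 0`, `f(M̂) = 1`. -/
noncomputable def hatOP (f : P → ℝ) : PHat P → ℝ := fun y =>
  WithBot.recBotCoe 0 (fun w => WithTop.recTopCoe 1 f w) y

/-- The saturated chains `x = y_1 ⋖ y_2 ⋖ ⋯ ⋖ y_k` from `x` up to a maximal element. -/
def maxChainsFrom (x : P) : Set (List P) :=
  {l | l.Chain' (· ⋖ ·) ∧ l.head? = some x ∧ ∃ z, l.getLast? = some z ∧ IsMax z}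

/-- The saturated chains `y_1 ⋖ ⋯ ⋖ y_k = x` from a minimal element up to `x`. -/
def maxChainsTo (x : P) : Set (List P) :=
  {l | l.Chain' (· ⋖ ·) ∧ (∃ a, l.head? = some a ∧ IsMin a) ∧ l.getLast? = some x}

/-- The maximal chains of `P` containing `e`. -/
def maxChainsThru (e : P) : Set (List P) :=
  {l | l.Chain' (· ⋖ ·) ∧ (∃ a, l.head? = some a ∧ IsMin a) ∧
    (∃ z, l.getLast? = some z ∧ IsMax z) ∧ e ∈ l}

/-- The transfer map `OR : C(P) → OR(P)`:
`(OR g)(x) = max{ g(y_1) + ⋯ + g(y_k) | x = y_1 ⋖ ⋯ ⋖ y_k, y_k maximal }`. -/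
noncomputable def ORmap (g : P → ℝ) (x : P) : ℝ :=
  sSup ((fun l => (l.map g).sum) '' maxChainsFrom x)

/-- The transfer map `OP : C(P) → OP(P)`:
`(OP g)(x) = max{ g(y_1) + ⋯ + g(y_k) | y_1 ⋖ ⋯ ⋖ y_k = x, y_1 minimal }`. -/
noncomputable def OPmap (g : P → ℝ) (x : P) : ℝ :=
  sSup ((fun l => (l.map g).sum) '' maxChainsTo x)

/-- The inverse transfer map: `(OR⁻¹ f)(x) = f(x) - max{ f(y) | y ⋗ x in P̂ }`. -/
noncomputable def ORinv (f : P → ℝ) (x : P) : ℝ :=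
  f x - sSup {v : ℝ | ∃ y : PHat P, toHat x ⋖ y ∧ v = hatOR f y}

/-- The inverse transfer map: `(OP⁻¹ f)(x) = f(x) - max{ f(y) | y ⋖ x in P̂ }`. -/
noncomputable def OPinv (f : P → ℝ) (x : P) : ℝ :=
  f x - sSup {v : ℝ | ∃ y : PHat P, y ⋖ toHat x ∧ v = hatOP f y}

/-- The piecewise-linear order ideal toggle on the order-reversing polytope:
the label of `e` is replaced by
`max{f(y) | y ⋗ e in P̂} + min{f(y) | y ⋖ e in P̂} - f(e)`. -/
noncomputable def tPL (e : P) (f : P → ℝ) : P → ℝ :=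
  Function.update f e
    (sSup {v : ℝ | ∃ y : PHat P, toHat e ⋖ y ∧ v = hatOR f y}
      + sInf {v : ℝ | ∃ y : PHat P, y ⋖ toHat e ∧ v = hatOR f y} - f e)

/-- The piecewise-linear antichain (chain polytope) toggle: the label of `e` is replaced
by `1 - max{ Σ g(y_i) | (y_1,…,y_k) a maximal chain of P containing e }`. -/
noncomputable def tauPL (e : P) (g : P → ℝ) : P → ℝ :=
  Function.update g e (1 - sSup ((fun l => (l.map g).sum) '' maxChainsThru e))

/-- The indicator function of a subset. -/
noncomputable def ind (S : Set P) : P → ℝ := fun x => if x ∈ S then 1 else 0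

def listComp {α : Type*} (fs : List (α → α)) : α → α := fs.foldr (· ∘ ·) id

theorem hatOR_update_ne {P : Type*} [PartialOrder P] (f : P → ℝ) (e : P) (c : ℝ)
    (y : PHat P) (hy : y ≠ toHat e) :
    hatOR (Function.update f e c) y = hatOR f y := by
  induction y using WithBot.recBotCoe with
  | bot => rfl
  | coe w =>
    induction w using WithTop.recTopCoe with
    | top => rfl
    | coe x =>
      have hx : x ≠ e := by
        intro h
        exact hy (by rw [h]; rfl)
      show hatOR (Function.update f e c) (toHat x) = hatOR f (toHat x)
      simp [hatOR, toHat, Function.update_of_ne hx]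

theorem upperSet_update {P : Type*} [PartialOrder P] (f : P → ℝ) (e : P) (c : ℝ) :
    {v : ℝ | ∃ y : PHat P, toHat e ⋖ y ∧ v = hatOR (Function.update f e c) y}
      = {v : ℝ | ∃ y : PHat P, toHat e ⋖ y ∧ v = hatOR f y} := by
  ext v
  constructor <;> rintro ⟨y, hy, rfl⟩
  · exact ⟨y, hy, hatOR_update_ne f e c y hy.ne'⟩
  · exact ⟨y, hy, (hatOR_update_ne f e c y hy.ne').symm⟩

theorem lowerSet_update {P : Type*} [PartialOrder P] (f : P → ℝ) (e : P) (c : ℝ) :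
    {v : ℝ | ∃ y : PHat P, y ⋖ toHat e ∧ v = hatOR (Function.update f e c) y}
      = {v : ℝ | ∃ y : PHat P, y ⋖ toHat e ∧ v = hatOR f y} := by
  ext v
  constructor <;> rintro ⟨y, hy, rfl⟩
  · exact ⟨y, hy, hatOR_update_ne f e c y hy.ne⟩
  · exact ⟨y, hy, (hatOR_update_ne f e c y hy.ne).symm⟩

theorem tPL_involutive {P : Type*} [PartialOrder P] (e : P) :
    Function.Involutive (tPL (P := P) e) := by
  intro f
  funext x
  rcases eq_or_ne x e with rfl | hx
  · simp only [tPL]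
    rw [Function.update_self]
    rw [upperSet_update, lowerSet_update, Function.update_self]
    ring
  · simp only [tPL]
    rw [Function.update_of_ne hx, Function.update_of_ne hx]

/-- The piecewise-linear order ideal toggle as a permutation of labelings. -/
noncomputable def tPLPerm {P : Type*} [PartialOrder P] (e : P) : Equiv.Perm (P → ℝ) :=
  (tPL_involutive e).toPerm _

/-- `η_S` for labelings: the composition of piecewise-linear order ideal toggles over a
list. -/
noncomputable def etaPLPerm {P : Type*} [PartialOrder P] (l : List P) :
    Equiv.Perm (P → ℝ) := (l.map tPLPerm).prod

/-- The chain polytope, as a subtype. -/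
abbrev CPSub (P : Type*) [PartialOrder P] : Type _ := {g : P → ℝ // InChainPolytope P g}

/-- The order-reversing polytope, as a subtype. -/
abbrev ORSub (P : Type*) [PartialOrder P] : Type _ := {f : P → ℝ // InORPolytope P f}

/-- The piecewise-linear toggle `t_e : OR(P) → OR(P)`. -/
noncomputable def tORSub {P : Type*} [PartialOrder P] (e : P) (f : ORSub P) : ORSub P :=
  if h : InORPolytope P (tPL e f.1) then ⟨tPL e f.1, h⟩ else f

/-- The piecewise-linear toggle `τ_e : C(P) → C(P)`. -/
noncomputable def tauCSub {P : Type*} [PartialOrder P] (e : P) (g : CPSub P) : CPSub P :=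
  if h : InChainPolytope P (tauPL e g.1) ∧ tauPL e (tauPL e g.1) = g.1
  then ⟨tauPL e g.1, h.1⟩ else g

theorem tORSub_involutive {P : Type*} [PartialOrder P] (e : P) :
    Function.Involutive (tORSub (P := P) e) := by
  intro f
  unfold tORSub
  by_cases h : InORPolytope P (tPL e f.1)
  · rw [dif_pos h]
    have h2 : InORPolytope P (tPL e (⟨tPL e f.1, h⟩ : ORSub P).1) := by
      show InORPolytope P (tPL e (tPL e f.1))
      rw [tPL_involutive e f.1]
      exact f.2
    rw [dif_pos h2]
    exact Subtype.ext (tPL_involutive e f.1)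
  · rw [dif_neg h, dif_neg h]

theorem tauCSub_involutive {P : Type*} [PartialOrder P] (e : P) :
    Function.Involutive (tauCSub (P := P) e) := by
  intro g
  unfold tauCSub
  by_cases h : InChainPolytope P (tauPL e g.1) ∧ tauPL e (tauPL e g.1) = g.1
  · rw [dif_pos h]
    have h2 : InChainPolytope P (tauPL e (⟨tauPL e g.1, h.1⟩ : CPSub P).1) ∧
        tauPL e (tauPL e (⟨tauPL e g.1, h.1⟩ : CPSub P).1)
          = (⟨tauPL e g.1, h.1⟩ : CPSub P).1 := by
      constructor
      · show InChainPolytope P (tauPL e (tauPL e g.1))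
        rw [h.2]
        exact g.2
      · show tauPL e (tauPL e (tauPL e g.1)) = tauPL e g.1
        exact congrArg (tauPL e) h.2
    rw [dif_pos h2]
    exact Subtype.ext h.2
  · rw [dif_neg h, dif_neg h]

/-- The toggle `t_e : OR(P) → OR(P)` as a permutation. -/
noncomputable def tORPerm {P : Type*} [PartialOrder P] (e : P) : Equiv.Perm (ORSub P) :=
  (tORSub_involutive e).toPerm _

/-- The toggle `τ_e : C(P) → C(P)` as a permutation. -/
noncomputable def tauCPerm {P : Type*} [PartialOrder P] (e : P) : Equiv.Perm (CPSub P) :=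
  (tauCSub_involutive e).toPerm _

/-- Composition of toggles `t_x` of `OR(P)` over a list. -/
noncomputable def etaORPerm {P : Type*} [PartialOrder P] (l : List P) :
    Equiv.Perm (ORSub P) := (l.map tORPerm).prod

/-- Composition of toggles `τ_x` of `C(P)` over a list. -/
noncomputable def etaCPerm {P : Type*} [PartialOrder P] (l : List P) :
    Equiv.Perm (CPSub P) := (l.map tauCPerm).prod

/-- A list `l` is a linear extension of the subposet `S`. -/
def IsLinExtListOn {P : Type*} [PartialOrder P] (S : Set P) (l : List P) : Prop :=
  l.Nodup ∧ (∀ x : P, x ∈ l ↔ x ∈ S) ∧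
    ∀ i j : Fin l.length, l.get i < l.get j → (i : ℕ) < (j : ℕ)

/-
The transfer map and its inverse satisfy `OR g x = g x + max_{y ⋗ x} OR g y` and
`OR⁻¹ f x = f x - max_{y ⋗ x} f y`, and a maximal chain through `x` splits at `x`, so `τ_x` sets
`g x` to `1 + g x - OP g x - OR g x`. Hence `OR (τ_x g) x = 1 - OP g x` and, dually,
`OP (τ_x g) x = 1 - OR g x`. The lower covers of `e` form an antichain, so the first and last
blocks of `t_e^*` toggle them independently, and a downward induction gives `OR ∘ t_e^* = t_e ∘ OR`.

Conjugating back, `τ_e = OR⁻¹ W⁻¹ t_e W⁻¹ OR` with `W = ∏_{x ⋖ e} τ_x^*`, so by upward induction on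
`e` the second square reduces to an identity between involutions `t_x` that commute unless `x`
and `y` are equal or related by a cover: if `N` and `E` are the products of the `t_x` over the
non-covers below `e` and over the covers of `e`, then `η_e = N E`, `η_x t_x η_x⁻¹ = N t_x N⁻¹`
for `x ⋖ e`, `E⁻¹ = E` and `t_e` commutes with `N`. Products along linear extensions do not
depend on the extension, because incomparable toggles commute.

Both squares restrict to the polytopes, so conjugation by `OR : C(P) ≃ OR(P)` maps `Tog_C(P)`
onto `Tog_OR(P)`.
-/

section CoverExtrema

open Function

variable (f : P → ℝ) (x : P)

/- `supAbove f x` and `infBelow f x` are `max {f y | x ⋖ y}` and `min {f y | y ⋖ x}` with covers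
taken in `P̂` and `f` extended by `f M̂ = 0`, `f m̂ = 1`, as in `tPL`; `supBelow` extends by
`f m̂ = 0`. -/
noncomputable def supAbove : ℝ := if IsMax x then 0 else sSup (f '' {z | x ⋖ z})

noncomputable def supBelow : ℝ := if IsMin x then 0 else sSup (f '' {z | z ⋖ x})

noncomputable def infBelow : ℝ := if IsMin x then 1 else sInf (f '' {z | z ⋖ x})

lemma sSup_hatOR_upperCovers :
    sSup {v : ℝ | ∃ y : PHat P, toHat x ⋖ y ∧ v = hatOR f y} = supAbove f x := by
  have : {v : ℝ | ∃ y : PHat P, toHat x ⋖ y ∧ v = hatOR f y}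
      = if IsMax x then {0} else f '' {z | x ⋖ z} := by
    ext v
    simp only [Set.mem_ofPred_eq, WithBot.exists, WithTop.exists, toHat, hatOR,
      WithBot.recBotCoe_coe, WithTop.recTopCoe_coe, WithTop.recTopCoe_top,
      WithBot.coe_covBy_coe, WithTop.coe_covBy_top, WithTop.coe_covBy_coe]
    split_ifs with hx
    · have : ∀ z, ¬ x ⋖ z := fun z hz => hx.not_lt hz.lt
      simp [hx, this]
    · simp [hx, eq_comm]
  rw [this, supAbove]
  split_ifs <;> simp

lemma sInf_hatOR_lowerCovers :
    sInf {v : ℝ | ∃ y : PHat P, y ⋖ toHat x ∧ v = hatOR f y} = infBelow f x := by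
  have : {v : ℝ | ∃ y : PHat P, y ⋖ toHat x ∧ v = hatOR f y}
      = if IsMin x then {1} else f '' {z | z ⋖ x} := by
    ext v
    simp only [Set.mem_ofPred_eq, WithBot.exists, WithTop.exists, toHat, hatOR,
      WithBot.recBotCoe_coe, WithTop.recTopCoe_coe, WithTop.recTopCoe_top, WithBot.recBotCoe_bot,
      WithBot.coe_covBy_coe, WithBot.bot_covBy_coe, WithTop.coe_covBy_coe]
    have hmin : IsMin (x : WithTop P) ↔ IsMin x := by simp [IsMin]
    split_ifs with hx
    · have : ∀ z, ¬ z ⋖ x := fun z hz => hx.not_lt hz.lt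
      simp [hmin, hx, this]
    · simp [hmin, hx, eq_comm]
  rw [this, infBelow]
  split_ifs <;> simp

lemma tPL_eq_update (e : P) (f : P → ℝ) :
    tPL e f = update f e (supAbove f e + infBelow f e - f e) := by
  rw [tPL, sSup_hatOR_upperCovers, sInf_hatOR_lowerCovers]

lemma ORinv_eq_sub_supAbove : ORinv f x = f x - supAbove f x := by
  rw [ORinv, sSup_hatOR_upperCovers]

variable {f x}

lemma supAbove_congr {f' : P → ℝ} (h : ∀ z, x ⋖ z → f z = f' z) : supAbove f x = supAbove f' x := by
  rw [supAbove, supAbove, Set.image_congr (s := {z | x ⋖ z}) h]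

lemma infBelow_congr {f' : P → ℝ} (h : ∀ z, z ⋖ x → f z = f' z) : infBelow f x = infBelow f' x := by
  rw [infBelow, infBelow, Set.image_congr (s := {z | z ⋖ x}) h]

open OrderDual in
lemma supAbove_toDual (f : Pᵒᵈ → ℝ) (x : P) : supAbove f (toDual x) = supBelow (f ∘ toDual) x := by
  have : {z | toDual x ⋖ z} = toDual '' {z | z ⋖ x} := by
    ext z
    exact ⟨fun h => ⟨ofDual z, toDual_covBy_toDual_iff.mp h, rfl⟩,
      by rintro ⟨w, hw, rfl⟩; exact toDual_covBy_toDual_iff.mpr hw⟩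
  simp only [supAbove, supBelow, isMax_toDual_iff, this, Set.image_comp]

variable [Fintype P]

lemma isGreatest_supAbove (hx : ¬ IsMax x) : IsGreatest (f '' {z | x ⋖ z}) (supAbove f x) := by
  have hne : (f '' {z | x ⋖ z}).Nonempty :=
    Set.Nonempty.image f (exists_covBy_of_wellFoundedLT hx)
  rw [supAbove, if_neg hx]
  exact ⟨hne.csSup_mem (Set.toFinite _), fun _ h => le_csSup (Set.toFinite _).bddAbove h⟩

lemma isGreatest_supBelow (hx : ¬ IsMin x) : IsGreatest (f '' {z | z ⋖ x}) (supBelow f x) := by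
  have hne : (f '' {z | z ⋖ x}).Nonempty :=
    Set.Nonempty.image f (exists_covBy_of_wellFoundedGT hx)
  rw [supBelow, if_neg hx]
  exact ⟨hne.csSup_mem (Set.toFinite _), fun _ h => le_csSup (Set.toFinite _).bddAbove h⟩

lemma isLeast_infBelow (hx : ¬ IsMin x) : IsLeast (f '' {z | z ⋖ x}) (infBelow f x) := by
  have hne : (f '' {z | z ⋖ x}).Nonempty :=
    Set.Nonempty.image f (exists_covBy_of_wellFoundedGT hx)
  rw [infBelow, if_neg hx]
  exact ⟨hne.csInf_mem (Set.toFinite _), fun _ h => csInf_le (Set.toFinite _).bddBelow h⟩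

lemma le_supAbove {z : P} (h : x ⋖ z) : f z ≤ supAbove f x :=
  (isGreatest_supAbove (not_isMax_of_lt h.lt)).2 ⟨z, h, rfl⟩

lemma infBelow_le {z : P} (h : z ⋖ x) : infBelow f x ≤ f z :=
  (isLeast_infBelow (not_isMin_of_lt h.lt)).2 ⟨z, h, rfl⟩

lemma supBelow_eq_one_sub_infBelow {f' : P → ℝ} (h : ∀ z, z ⋖ x → f' z = 1 - f z) :
    supBelow f' x = 1 - infBelow f x := by
  by_cases hx : IsMin x
  · simp [supBelow, infBelow, hx]
  obtain ⟨⟨z, hz, hzx⟩, hle⟩ := isLeast_infBelow (f := f) hx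
  refine (isGreatest_supBelow hx).unique ⟨⟨z, hz, by rw [h z hz, hzx]⟩, ?_⟩
  rintro _ ⟨w, hw, rfl⟩
  linarith [h w hw, hle ⟨w, hw, rfl⟩]

end CoverExtrema

section SaturatedChains

open OrderDual

variable {x : P}

lemma mem_maxChainsFrom_iff {l : List P} :
    l ∈ maxChainsFrom x ↔
      (IsMax x ∧ l = [x]) ∨ ∃ z t, x ⋖ z ∧ t ∈ maxChainsFrom z ∧ l = x :: t := by
  constructor
  · rintro ⟨hch, hhd, w, hlast, hw⟩
    obtain ⟨t, rfl⟩ := List.head?_eq_some_iff.mp hhd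
    rcases t with _ | ⟨z, t⟩
    · simp only [List.getLast?_singleton, Option.some.injEq] at hlast
      exact Or.inl ⟨hlast ▸ hw, rfl⟩
    · obtain ⟨hxz, hch⟩ := List.isChain_cons_cons.mp hch
      rw [List.getLast?_cons_cons] at hlast
      exact Or.inr ⟨z, z :: t, hxz, ⟨hch, rfl, w, hlast, hw⟩, rfl⟩
  · rintro (⟨hx, rfl⟩ | ⟨z, t, hxz, ⟨hch, hhd, w, hlast, hw⟩, rfl⟩)
    · exact ⟨List.isChain_singleton x, rfl, x, rfl, hx⟩
    · obtain ⟨t, rfl⟩ := List.head?_eq_some_iff.mp hhd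
      exact ⟨List.isChain_cons_cons.mpr ⟨hxz, hch⟩, rfl, w, by rwa [List.getLast?_cons_cons], hw⟩

set_option linter.deprecated false in
lemma mem_maxChainsTo_iff_reverse_mem {l : List P} :
    l ∈ maxChainsTo x ↔ (l.map toDual).reverse ∈ maxChainsFrom (toDual x) := by
  simp only [maxChainsTo, maxChainsFrom, Set.mem_ofPred_eq, List.Chain', List.isChain_reverse,
    List.isChain_map, toDual_covBy_toDual_iff, List.head?_reverse, List.getLast?_reverse,
    List.getLast?_map, List.head?_map, OrderDual.exists, isMax_toDual_iff]
  simp [Option.map_eq_some_iff]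
  tauto

set_option linter.deprecated false in
lemma append_cons_mem_maxChainsThru_iff {s t : List P} :
    s ++ x :: t ∈ maxChainsThru x ↔ s ++ [x] ∈ maxChainsTo x ∧ x :: t ∈ maxChainsFrom x := by
  simp only [maxChainsThru, maxChainsTo, maxChainsFrom, Set.mem_ofPred_eq, List.Chain']
  rw [List.isChain_split]
  simp [List.head?_append, List.getLast?_append]
  tauto

lemma chainSums_maxChainsTo (g : P → ℝ) (x : P) :
    (fun l => (l.map g).sum) '' maxChainsTo x
      = (fun l => (l.map (g ∘ ofDual)).sum) '' maxChainsFrom (toDual x) := by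
  ext v
  constructor
  · rintro ⟨l, hl, rfl⟩
    exact ⟨_, mem_maxChainsTo_iff_reverse_mem.mp hl, by simp [List.sum_reverse, Function.comp_def]⟩
  · rintro ⟨m, hm, rfl⟩
    refine ⟨(m.map ofDual).reverse, mem_maxChainsTo_iff_reverse_mem.mpr ?_, ?_⟩
    · simpa [List.map_reverse] using hm
    · simp [List.sum_reverse]

lemma OPmap_eq_ORmap_toDual (g : P → ℝ) (x : P) : OPmap g x = ORmap (g ∘ ofDual) (toDual x) :=
  congrArg sSup (chainSums_maxChainsTo g x)

end SaturatedChains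

section TransferMap

open Function OrderDual

variable [Fintype P] {x : P}

lemma isGreatest_chainSums_maxChainsFrom (g : P → ℝ) (x : P) :
    IsGreatest ((fun l => (l.map g).sum) '' maxChainsFrom x) (g x + supAbove (ORmap g) x) := by
  induction x using WellFoundedGT.induction with
  | _ x IH =>
  have hOR : ∀ y, x < y →
      IsGreatest ((fun l => (l.map g).sum) '' maxChainsFrom y) (ORmap g y) :=
    fun y hy => by rw [show ORmap g y = _ from (IH y hy).csSup_eq]; exact IH y hy
  by_cases hx : IsMax x
  · refine ⟨⟨[x], mem_maxChainsFrom_iff.mpr (Or.inl ⟨hx, rfl⟩), by simp [supAbove, hx]⟩, ?_⟩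
    rintro _ ⟨l, hl, rfl⟩
    rcases mem_maxChainsFrom_iff.mp hl with ⟨-, rfl⟩ | ⟨z, -, hz, -⟩
    · simp [supAbove, hx]
    · exact absurd hz.lt hx.not_lt
  obtain ⟨⟨z, hz, hzsup⟩, hsup⟩ := isGreatest_supAbove (f := ORmap g) hx
  obtain ⟨⟨t, ht, htsum⟩, -⟩ := hOR z hz.lt
  refine ⟨⟨x :: t, mem_maxChainsFrom_iff.mpr (Or.inr ⟨z, t, hz, ht, rfl⟩), ?_⟩, ?_⟩
  · simp only [List.map_cons, List.sum_cons] at htsum ⊢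
    rw [htsum, hzsup]
  · rintro _ ⟨l, hl, rfl⟩
    rcases mem_maxChainsFrom_iff.mp hl with ⟨hx', -⟩ | ⟨z', t', hz', ht', rfl⟩
    · exact absurd hx' hx
    · simp only [List.map_cons, List.sum_cons]
      linarith [(hOR z' hz'.lt).2 ⟨t', ht', rfl⟩, hsup ⟨z', hz', rfl⟩]

lemma ORmap_eq_add_supAbove (g : P → ℝ) (x : P) : ORmap g x = g x + supAbove (ORmap g) x :=
  (isGreatest_chainSums_maxChainsFrom g x).csSup_eq

lemma isGreatest_ORmap (g : P → ℝ) (x : P) :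
    IsGreatest ((fun l => (l.map g).sum) '' maxChainsFrom x) (ORmap g x) :=
  ORmap_eq_add_supAbove g x ▸ isGreatest_chainSums_maxChainsFrom g x

lemma ORmap_congr {g₁ g₂ : P → ℝ} (h : ∀ y, x ≤ y → g₁ y = g₂ y) : ORmap g₁ x = ORmap g₂ x := by
  induction x using WellFoundedGT.induction with
  | _ x IH =>
  rw [ORmap_eq_add_supAbove, ORmap_eq_add_supAbove g₂, h x le_rfl,
    supAbove_congr fun z hz => IH z hz.lt fun y hy => h y (hz.le.trans hy)]

lemma ORmap_update_self (g : P → ℝ) (x : P) (c : ℝ) :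
    ORmap (update g x c) x = ORmap g x - g x + c := by
  rw [ORmap_eq_add_supAbove, ORmap_eq_add_supAbove g, update_self,
    supAbove_congr fun z hz => ORmap_congr fun y hy => update_of_ne (hz.lt.trans_le hy).ne' _ _]
  ring

lemma ORinv_ORmap (g : P → ℝ) : ORinv (ORmap g) = g := by
  funext x
  rw [ORinv_eq_sub_supAbove, ORmap_eq_add_supAbove g x]
  ring

lemma ORmap_ORinv (f : P → ℝ) : ORmap (ORinv f) = f := by
  funext x
  induction x using WellFoundedGT.induction with
  | _ x IH =>
  rw [ORmap_eq_add_supAbove, ORinv_eq_sub_supAbove, supAbove_congr fun z hz => IH z hz.lt]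
  ring

lemma isGreatest_OPmap (g : P → ℝ) (x : P) :
    IsGreatest ((fun l => (l.map g).sum) '' maxChainsTo x) (OPmap g x) := by
  rw [chainSums_maxChainsTo, OPmap_eq_ORmap_toDual]
  exact isGreatest_ORmap _ _

lemma OPmap_eq_add_supBelow (g : P → ℝ) (x : P) : OPmap g x = g x + supBelow (OPmap g) x := by
  rw [OPmap_eq_ORmap_toDual, ORmap_eq_add_supAbove, supAbove_toDual]
  congr 2
  funext y
  exact (OPmap_eq_ORmap_toDual g y).symm

lemma OPmap_congr {g₁ g₂ : P → ℝ} (h : ∀ y, y ≤ x → g₁ y = g₂ y) : OPmap g₁ x = OPmap g₂ x := by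
  rw [OPmap_eq_ORmap_toDual, OPmap_eq_ORmap_toDual]
  exact ORmap_congr fun y hy => h (ofDual y) hy

lemma OPmap_update_self (g : P → ℝ) (x : P) (c : ℝ) :
    OPmap (update g x c) x = OPmap g x - g x + c := by
  have : update g x c ∘ ofDual = update (g ∘ ofDual) (toDual x) c :=
    update_comp_eq_of_injective g ofDual.injective (toDual x) c
  rw [OPmap_eq_ORmap_toDual, OPmap_eq_ORmap_toDual, this]
  exact ORmap_update_self (g ∘ ofDual) (toDual x) c

lemma sSup_chainSums_maxChainsThru (g : P → ℝ) (x : P) :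
    sSup ((fun l => (l.map g).sum) '' maxChainsThru x) = OPmap g x + ORmap g x - g x := by
  refine IsGreatest.csSup_eq ⟨?_, ?_⟩
  · obtain ⟨⟨c₁, h₁, hs₁⟩, -⟩ := isGreatest_OPmap g x
    obtain ⟨⟨c₂, h₂, hs₂⟩, -⟩ := isGreatest_ORmap g x
    obtain ⟨s, rfl⟩ := List.getLast?_eq_some_iff.mp h₁.2.2
    obtain ⟨t, rfl⟩ := List.head?_eq_some_iff.mp h₂.2.1
    refine ⟨s ++ x :: t, append_cons_mem_maxChainsThru_iff.mpr ⟨h₁, h₂⟩, ?_⟩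
    simp only [List.map_append, List.map_cons, List.sum_append, List.sum_cons, List.map_nil,
      List.sum_nil] at hs₁ hs₂ ⊢
    linarith
  · rintro _ ⟨l, hl, rfl⟩
    obtain ⟨s, t, rfl⟩ := List.append_of_mem hl.2.2.2
    obtain ⟨h₁, h₂⟩ := append_cons_mem_maxChainsThru_iff.mp hl
    have hs₁ := (isGreatest_OPmap g x).2 ⟨_, h₁, rfl⟩
    have hs₂ := (isGreatest_ORmap g x).2 ⟨_, h₂, rfl⟩
    simp only [List.map_append, List.map_cons, List.sum_append, List.sum_cons, List.map_nil,
      List.sum_nil] at hs₁ hs₂ ⊢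
    linarith

lemma tauPL_eq_update (x : P) (g : P → ℝ) :
    tauPL x g = update g x (1 + g x - OPmap g x - ORmap g x) := by
  rw [tauPL, sSup_chainSums_maxChainsThru]
  congr 1
  ring

lemma tauPL_apply_of_ne {x y : P} (h : y ≠ x) (g : P → ℝ) : tauPL x g y = g y := by
  rw [tauPL_eq_update, update_of_ne h]

lemma ORmap_tauPL_self (x : P) (g : P → ℝ) : ORmap (tauPL x g) x = 1 - OPmap g x := by
  rw [tauPL_eq_update, ORmap_update_self]
  ring

lemma OPmap_tauPL_self (x : P) (g : P → ℝ) : OPmap (tauPL x g) x = 1 - ORmap g x := by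
  rw [tauPL_eq_update, OPmap_update_self]
  ring

lemma tauPL_involutive (x : P) : Involutive (tauPL x) := by
  intro g
  rw [tauPL_eq_update x (tauPL x g), ORmap_tauPL_self, OPmap_tauPL_self, tauPL_eq_update,
    update_self, update_idem]
  convert update_eq_self x g using 2
  ring

lemma tauPL_self_congr {g₁ g₂ : P → ℝ} (h : ∀ y, y ≤ x ∨ x ≤ y → g₁ y = g₂ y) :
    tauPL x g₁ x = tauPL x g₂ x := by
  simp only [tauPL_eq_update, update_self, h x (Or.inl le_rfl),
    OPmap_congr fun y hy => h y (Or.inl hy), ORmap_congr fun y hy => h y (Or.inr hy)]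

end TransferMap

section CoverToggles

open Function

lemma isAntichain_covBy (e : P) : IsAntichain (· ≤ ·) {x | x ⋖ e} :=
  fun _ ha _ hb hab hle => ha.2 (lt_of_le_of_ne hle hab) hb.lt

variable [Fintype P]

lemma listComp_map_tauPL_of_isAntichain {s : List P} (hnd : s.Nodup)
    (hs : IsAntichain (· ≤ ·) {x | x ∈ s}) (g : P → ℝ) :
    listComp (s.map tauPL) g = fun x => if x ∈ s then tauPL x g x else g x := by
  induction s with
  | nil => rfl
  | cons a s ih =>
    obtain ⟨has, hnd⟩ := List.nodup_cons.mp hnd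
    have hcomp : ∀ y, y ≤ a ∨ a ≤ y → y ∉ s := by
      intro y hy hys
      have hya : y ≠ a := fun h => has (h ▸ hys)
      rcases hy with hy | hy
      · exact hs (List.mem_cons_of_mem a hys) List.mem_cons_self hya hy
      · exact hs List.mem_cons_self (List.mem_cons_of_mem a hys) hya.symm hy
    change tauPL a (listComp (s.map tauPL) g) = _
    rw [ih hnd (hs.subset fun x hx => List.mem_cons_of_mem a hx)]
    funext y
    by_cases hya : y = a
    · subst hya
      rw [if_pos List.mem_cons_self]
      exact tauPL_self_congr fun z hz => if_neg (hcomp z hz)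
    · simp only [tauPL_apply_of_ne hya, List.mem_cons, hya, false_or]

variable {e : P} {cov : List P}

lemma listComp_map_tauPL_covers_apply (hnd : cov.Nodup) (hcov : ∀ x, x ∈ cov ↔ x ⋖ e)
    (g : P → ℝ) (x : P) :
    listComp (cov.map tauPL) g x = if x ⋖ e then tauPL x g x else g x := by
  have hs : {x | x ∈ cov} = {x | x ⋖ e} := Set.ext hcov
  rw [listComp_map_tauPL_of_isAntichain hnd (hs ▸ isAntichain_covBy e)]
  simp only [hcov]

lemma OPmap_listComp_covers_of_covBy (hnd : cov.Nodup) (hcov : ∀ x, x ∈ cov ↔ x ⋖ e)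
    (g : P → ℝ) {x : P} (hx : x ⋖ e) :
    OPmap (listComp (cov.map tauPL) g) x = 1 - ORmap g x := by
  rw [← OPmap_tauPL_self]
  refine OPmap_congr fun y hy => ?_
  rw [listComp_map_tauPL_covers_apply hnd hcov]
  rcases hy.lt_or_eq with hy | rfl
  · rw [if_neg fun hye => hye.2 hy hx.lt, tauPL_apply_of_ne hy.ne]
  · rw [if_pos hx]

lemma ORmap_tauPL_listComp_covers (hnd : cov.Nodup) (hcov : ∀ x, x ∈ cov ↔ x ⋖ e)
    (g : P → ℝ) : ORmap (tauPL e (listComp (cov.map tauPL) g)) e = tPL e (ORmap g) e := by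
  rw [ORmap_tauPL_self, OPmap_eq_add_supBelow,
    supBelow_eq_one_sub_infBelow fun x hx => OPmap_listComp_covers_of_covBy hnd hcov g hx,
    listComp_map_tauPL_covers_apply hnd hcov, if_neg (lt_irrefl e ∘ CovBy.lt), tPL_eq_update,
    update_self, ORmap_eq_add_supAbove g e]
  ring

theorem ORmap_coverToggle (hnd : cov.Nodup) (hcov : ∀ x, x ∈ cov ↔ x ⋖ e) (g : P → ℝ) :
    ORmap ((listComp (cov.map tauPL) ∘ tauPL e ∘ listComp (cov.map tauPL)) g)
      = tPL e (ORmap g) := by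
  have hT := listComp_map_tauPL_covers_apply hnd hcov
  have hOR₂ := ORmap_tauPL_listComp_covers hnd hcov g
  set g₁ := listComp (cov.map tauPL) g
  set g₂ := tauPL e g₁
  set g' := listComp (cov.map tauPL) g₂
  set f := ORmap g
  have hg₁ : ∀ y, ¬ y ⋖ e → g₁ y = g y := fun y hy => (hT g y).trans (if_neg hy)
  have hg₂ : ∀ y, y ≠ e → g₂ y = g₁ y := fun y hy => tauPL_apply_of_ne hy g₁
  have hg' : ∀ y, ¬ y ⋖ e → g' y = g₂ y := fun y hy => (hT g₂ y).trans (if_neg hy)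
  change ORmap g' = tPL e f
  funext x
  induction x using WellFoundedGT.induction with
  | _ x IH =>
  by_cases hxe : x = e
  · subst hxe
    rw [← hOR₂]
    exact ORmap_congr fun y hy => hg' y fun h => h.lt.not_ge hy
  rw [tPL_eq_update, update_of_ne hxe]
  by_cases hx : x ⋖ e
  · calc ORmap g' x = ORmap (tauPL x g₂) x := by
          refine ORmap_congr fun y hy => ?_
          rcases hy.lt_or_eq with hy | rfl
          · rw [hg' y fun h => hx.2 hy h.lt, tauPL_apply_of_ne hy.ne']
          · exact (hT g₂ _).trans (if_pos hx)
      _ = 1 - OPmap g₁ x := by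
          rw [ORmap_tauPL_self]
          congr 1
          exact OPmap_congr fun y hy => hg₂ y fun h => (h ▸ hy).not_gt hx.lt
      _ = f x := by rw [OPmap_listComp_covers_of_covBy hnd hcov g hx]; ring
  · have hf : f x = g x + supAbove f x := ORmap_eq_add_supAbove g x
    rw [ORmap_eq_add_supAbove, hg' x hx, hg₂ x hxe, hg₁ x hx, hf,
      supAbove_congr fun z hz => IH z hz.lt]
    congr 1
    refine supAbove_congr fun z hz => ?_
    rw [tPL_eq_update, update_of_ne]
    rintro rfl
    exact hx hz

end CoverToggles

section LinearExtensionProducts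

variable {M : Type*} [Monoid M] {φ : P → M}

lemma IsLinExtListOn.pairwise {S : Set P} {l : List P} (h : IsLinExtListOn S l) :
    l.Pairwise (fun a b => ¬ b < a) := by
  rw [List.pairwise_iff_get]
  intro i j hij hlt
  exact absurd (h.2.2 j i hlt) (not_lt.mpr hij.le)

lemma prod_map_eq_of_perm_of_pairwise_not_lt
    (hφ : ∀ x y, ¬ x < y → ¬ y < x → Commute (φ x) (φ y)) {l₁ l₂ : List P} (hp : l₁.Perm l₂)
    (h₁ : l₁.Pairwise (fun a b => ¬ b < a)) (h₂ : l₂.Pairwise (fun a b => ¬ b < a)) :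
    (l₁.map φ).prod = (l₂.map φ).prod := by
  induction l₁ generalizing l₂ with
  | nil => rw [List.Perm.nil_eq hp]
  | cons a t ih =>
    obtain ⟨u, v, rfl⟩ := List.append_of_mem (hp.subset List.mem_cons_self)
    have hsub : (u ++ v).Sublist (u ++ a :: v) := (List.sublist_cons_self a v).append_left u
    have hcomm : Commute (φ a) (u.map φ).prod := by
      refine Commute.list_prod_right _ _ fun _ hb => ?_
      obtain ⟨b, hbu, rfl⟩ := List.mem_map.mp hb
      have hab : ¬ a < b := (List.pairwise_append.mp h₂).2.2 b hbu a List.mem_cons_self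
      rcases List.mem_cons.mp (hp.symm.subset (List.mem_append_left _ hbu)) with rfl | hbt
      · exact Commute.refl _
      · exact hφ a b hab ((List.pairwise_cons.mp h₁).1 b hbt)
    rw [List.map_cons, List.prod_cons,
      ih ((List.perm_cons a).mp (hp.trans List.perm_middle)) h₁.of_cons (h₂.sublist hsub)]
    simp only [List.map_append, List.map_cons, List.prod_append, List.prod_cons, ← mul_assoc,
      hcomm.eq]

lemma prod_map_eq_of_mem_iff (hφ : ∀ x y, ¬ x < y → ¬ y < x → Commute (φ x) (φ y))
    {l₁ l₂ : List P} (hnd₁ : l₁.Nodup) (hnd₂ : l₂.Nodup) (hmem : ∀ x, x ∈ l₁ ↔ x ∈ l₂)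
    (h₁ : l₁.Pairwise (fun a b => ¬ b < a)) (h₂ : l₂.Pairwise (fun a b => ¬ b < a)) :
    (l₁.map φ).prod = (l₂.map φ).prod :=
  prod_map_eq_of_perm_of_pairwise_not_lt hφ ((List.perm_ext_iff_of_nodup hnd₁ hnd₂).mpr hmem) h₁ h₂

lemma prod_map_eq_prod_filter_mul (hφ : ∀ x y, ¬ x < y → ¬ y < x → Commute (φ x) (φ y))
    {l : List P} (hl : l.Pairwise (fun a b => ¬ b < a)) (p : P → Prop) [DecidablePred p]
    (hp : ∀ a ∈ l, ∀ b ∈ l, a < b → p b → p a) :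
    (l.map φ).prod = ((l.filter p).map φ).prod * ((l.filter fun x => ¬ p x).map φ).prod := by
  rw [← List.prod_append, ← List.map_append]
  refine prod_map_eq_of_perm_of_pairwise_not_lt hφ ?_ hl ?_
  · simpa using (List.filter_append_perm (fun x => decide (p x)) l).symm
  · refine List.pairwise_append.mpr
      ⟨hl.sublist List.filter_sublist, hl.sublist List.filter_sublist, ?_⟩
    intro a ha b hb hba
    simp only [List.mem_filter, decide_eq_true_eq] at ha hb
    exact hb.2 (hp b hb.1 a ha.1 hba ha.2)

end LinearExtensionProducts

section ToggleConjugation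

variable {G : Type*} [Group G] {t : P → G}

lemma commute_of_not_lt_of_not_lt
    (ht : ∀ x y, x ≠ y → ¬ x ⋖ y → ¬ y ⋖ x → Commute (t x) (t y)) (x y : P)
    (hxy : ¬ x < y) (hyx : ¬ y < x) : Commute (t x) (t y) := by
  by_cases h : x = y
  · exact h ▸ Commute.refl _
  · exact ht x y h (fun h' => hxy h'.lt) (fun h' => hyx h'.lt)

variable {e : P} {cov : List P} {l : List P}

lemma inv_prod_map_covers (ht_inv : ∀ x, (t x)⁻¹ = t x)
    (ht : ∀ x y, x ≠ y → ¬ x ⋖ y → ¬ y ⋖ x → Commute (t x) (t y))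
    (hcov : ∀ x, x ∈ cov ↔ x ⋖ e) :
    ((cov.map t).prod)⁻¹ = (cov.map t).prod := by
  have hpw : ∀ l : List P, (∀ x, x ∈ l → x ⋖ e) → l.Pairwise (fun a b => ¬ b < a) :=
    fun l hl => List.pairwise_of_forall_mem_list fun a ha b hb hba => (hl b hb).2 hba (hl a ha).lt
  rw [List.prod_inv_reverse, List.map_map, Function.comp_def]
  simp only [ht_inv, ← List.map_reverse]
  exact prod_map_eq_of_perm_of_pairwise_not_lt (commute_of_not_lt_of_not_lt ht)
    (List.reverse_perm cov) (hpw _ fun x hx => (hcov x).mp (List.mem_reverse.mp hx))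
    (hpw _ fun x hx => (hcov x).mp hx)

lemma prod_map_lext_eq_mul (ht : ∀ x y, x ≠ y → ¬ x ⋖ y → ¬ y ⋖ x → Commute (t x) (t y))
    (hnd : cov.Nodup) (hcov : ∀ x, x ∈ cov ↔ x ⋖ e) (hl : IsLinExtListOn {y | y < e} l) :
    (l.map t).prod = ((l.filter fun y => ¬ y ⋖ e).map t).prod * (cov.map t).prod := by
  have hφ := commute_of_not_lt_of_not_lt ht
  have hlt : ∀ y, y ∈ l ↔ y < e := hl.2.1
  rw [prod_map_eq_prod_filter_mul hφ hl.pairwise (fun y => ¬ y ⋖ e)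
    fun a _ b hb hab _ ha => ha.2 hab ((hlt b).mp hb)]
  congr 1
  refine prod_map_eq_of_mem_iff hφ (hl.1.filter _) hnd (fun y => ?_)
    (hl.pairwise.sublist List.filter_sublist)
    (List.pairwise_of_forall_mem_list fun a ha b hb hba =>
      ((hcov b).mp hb).2 hba ((hcov a).mp ha).lt)
  simp only [List.mem_filter, hlt, hcov, not_not, decide_eq_true_eq]
  exact ⟨And.right, fun h => ⟨h.lt, h⟩⟩

lemma conj_prod_map_lext_of_covBy
    (ht : ∀ x y, x ≠ y → ¬ x ⋖ y → ¬ y ⋖ x → Commute (t x) (t y))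
    (hl : IsLinExtListOn {y | y < e} l) {x : P} (hx : x ⋖ e) {lx : List P}
    (hlx : IsLinExtListOn {y | y < x} lx) :
    (lx.map t).prod * t x * ((lx.map t).prod)⁻¹
      = ((l.filter fun y => ¬ y ⋖ e).map t).prod * t x
        * (((l.filter fun y => ¬ y ⋖ e).map t).prod)⁻¹ := by
  have hφ := commute_of_not_lt_of_not_lt ht
  have hlt : ∀ y, y ∈ l ↔ y < e := hl.2.1
  have hl₀ := hl.pairwise.sublist (List.filter_sublist (p := fun y => decide ¬ y ⋖ e))
  rw [prod_map_eq_prod_filter_mul hφ hl₀ (· < x) fun a _ b _ hab hb => hab.trans hb,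
    prod_map_eq_of_mem_iff hφ ((hl.1.filter _).filter _) hlx.1 (fun y => ?_)
      (hl₀.sublist List.filter_sublist) hlx.pairwise]
  · set R := (((l.filter fun y => ¬ y ⋖ e).filter fun y => ¬ y < x).map t).prod
    have hR : Commute (t x) R := by
      refine Commute.list_prod_right _ _ fun _ hy => ?_
      obtain ⟨b, hb, rfl⟩ := List.mem_map.mp hy
      simp only [List.mem_filter, hlt, decide_eq_true_eq] at hb
      obtain ⟨⟨hbe, hbcov⟩, hbx⟩ := hb
      exact ht x b (fun h => hbcov (h ▸ hx)) (fun h => hx.2 h.lt hbe) (fun h => hbx h.lt)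
    rw [mul_inv_rev, mul_assoc _ R, ← hR.eq]
    group
  · simp only [List.mem_filter, hlt, hlx.2.1, Set.mem_ofPred_eq, decide_eq_true_eq]
    exact ⟨And.right, fun h => ⟨⟨h.trans hx.lt, fun h' => h'.2 h hx.lt⟩, h⟩⟩

lemma commute_prod_map_filter_not_covBy
    (ht : ∀ x y, x ≠ y → ¬ x ⋖ y → ¬ y ⋖ x → Commute (t x) (t y))
    (hl : IsLinExtListOn {y | y < e} l) :
    Commute (t e) ((l.filter fun y => ¬ y ⋖ e).map t).prod := by
  refine Commute.list_prod_right _ _ fun _ hy => ?_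
  obtain ⟨b, hb, rfl⟩ := List.mem_map.mp hy
  simp only [List.mem_filter, hl.2.1, Set.mem_ofPred_eq, decide_eq_true_eq] at hb
  exact ht e b hb.1.ne' (fun h => h.lt.not_gt hb.1) hb.2

theorem conj_prod_map_lext_eq (ht_inv : ∀ x, (t x)⁻¹ = t x)
    (ht : ∀ x y, x ≠ y → ¬ x ⋖ y → ¬ y ⋖ x → Commute (t x) (t y))
    (hnd : cov.Nodup) (hcov : ∀ x, x ∈ cov ↔ x ⋖ e) {lext : P → List P}
    (hlext : ∀ x, IsLinExtListOn {y | y < x} (lext x)) :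
    ((lext e).map t).prod * t e * (((lext e).map t).prod)⁻¹
      = ((cov.map fun x => ((lext x).map t).prod * t x * (((lext x).map t).prod)⁻¹).prod)⁻¹
        * t e
        * ((cov.map fun x => ((lext x).map t).prod * t x * (((lext x).map t).prod)⁻¹).prod)⁻¹ := by
  have hW : (cov.map fun x => ((lext x).map t).prod * t x * (((lext x).map t).prod)⁻¹).prod
      = MulAut.conj (((lext e).filter fun y => ¬ y ⋖ e).map t).prod (cov.map t).prod := by
    rw [map_list_prod, List.map_map]
    exact congrArg List.prod (List.map_congr_left fun x hx =>
      conj_prod_map_lext_of_covBy ht (hlext e) ((hcov x).mp hx) (hlext x))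
  have hNt := commute_prod_map_filter_not_covBy ht (hlext e)
  have hE := inv_prod_map_covers ht_inv ht hcov
  rw [hW, MulAut.conj_apply, prod_map_lext_eq_mul ht hnd hcov (hlext e)]
  generalize (((lext e).filter fun y => ¬ y ⋖ e).map t).prod = N at hNt ⊢
  generalize (cov.map t).prod = E at hE ⊢
  have hN : N⁻¹ * t e * N = t e := by rw [mul_assoc, hNt.eq, inv_mul_cancel_left]
  rw [mul_inv_rev, mul_inv_rev, mul_inv_rev, inv_inv, hE]
  conv_lhs => rw [← hN]
  group

end ToggleConjugation

section TransferConjugation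

open Function

lemma tPL_update_of_not_covBy {x y : P} (hxy : x ≠ y) (h₁ : ¬ x ⋖ y) (h₂ : ¬ y ⋖ x)
    (f : P → ℝ) (c : ℝ) : tPL x (update f y c) = update (tPL x f) y c := by
  rw [tPL_eq_update, tPL_eq_update, update_of_ne hxy,
    supAbove_congr fun z hz => update_of_ne (by rintro rfl; exact h₁ hz) c f,
    infBelow_congr fun z hz => update_of_ne (by rintro rfl; exact h₂ hz) c f, update_comm hxy.symm]

lemma tPLPerm_commute {x y : P} (hxy : x ≠ y) (h₁ : ¬ x ⋖ y) (h₂ : ¬ y ⋖ x) :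
    Commute (tPLPerm x) (tPLPerm y) := by
  refine Equiv.ext fun f => ?_
  change tPL x (tPL y f) = tPL y (tPL x f)
  rw [tPL_eq_update y, tPL_update_of_not_covBy hxy h₁ h₂, tPL_eq_update x f,
    tPL_update_of_not_covBy hxy.symm h₂ h₁, tPL_eq_update y, update_comm hxy]

lemma tPLPerm_inv (x : P) : (tPLPerm x)⁻¹ = tPLPerm x := Equiv.ext fun _ => rfl

lemma listComp_map_coe {α : Type*} (l : List (Equiv.Perm α)) :
    listComp (l.map (⇑)) = ⇑l.prod := by
  induction l with
  | nil => rfl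
  | cons σ l ih => exact congrArg (σ ∘ ·) ih

variable [Fintype P]

noncomputable def tauPLPerm (x : P) : Equiv.Perm (P → ℝ) := (tauPL_involutive x).toPerm _

variable (P) in
noncomputable def ORmapPerm : Equiv.Perm (P → ℝ) where
  toFun := ORmap
  invFun := ORinv
  left_inv := ORinv_ORmap
  right_inv := ORmap_ORinv

lemma ORmapPerm_mul_coverToggle {e : P} {cov : List P} (hnd : cov.Nodup)
    (hcov : ∀ x, x ∈ cov ↔ x ⋖ e) :
    ORmapPerm P * ((cov.map tauPLPerm).prod * tauPLPerm e * (cov.map tauPLPerm).prod)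
      = tPLPerm e * ORmapPerm P := by
  refine Equiv.ext fun g => ?_
  have h := ORmap_coverToggle hnd hcov g
  rw [show cov.map tauPL = (cov.map tauPLPerm).map (⇑) by rw [List.map_map]; rfl,
    listComp_map_coe] at h
  exact h

theorem tauPLPerm_eq_conj {cov lext : P → List P}
    (hcov : ∀ e : P, (cov e).Nodup ∧ ∀ x : P, x ∈ cov e ↔ x ⋖ e)
    (hlext : ∀ e : P, IsLinExtListOn {x : P | x < e} (lext e)) (e : P) :
    tauPLPerm e
      = (ORmapPerm P)⁻¹ * (etaPLPerm (lext e) * tPLPerm e * (etaPLPerm (lext e))⁻¹)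
          * ORmapPerm P := by
  induction e using WellFoundedLT.induction with
  | _ e IH =>
  have h := ORmapPerm_mul_coverToggle (hcov e).1 (hcov e).2
  set O := ORmapPerm P
  set W := ((cov e).map fun x => etaPLPerm (lext x) * tPLPerm x * (etaPLPerm (lext x))⁻¹).prod
  have hC : ((cov e).map tauPLPerm).prod = O⁻¹ * W * O := by
    rw [List.map_congr_left fun x hx => IH x ((hcov e).2 x |>.mp hx).lt]
    have : O⁻¹ * W * O = MulAut.conj O⁻¹ W := by rw [MulAut.conj_apply, inv_inv]
    rw [this, map_list_prod, List.map_map]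
    exact congrArg List.prod (List.map_congr_left fun x _ => by simp)
  have hkey : etaPLPerm (lext e) * tPLPerm e * (etaPLPerm (lext e))⁻¹ = W⁻¹ * tPLPerm e * W⁻¹ :=
    conj_prod_map_lext_eq tPLPerm_inv (fun x y => tPLPerm_commute) (hcov e).1 (hcov e).2 hlext
  rw [hC] at h
  have hτ : tauPLPerm e = (O⁻¹ * W * O)⁻¹ * (O⁻¹ * (tPLPerm e * O)) * (O⁻¹ * W * O)⁻¹ := by
    rw [← h]
    group
  rw [hτ, hkey]
  group

theorem ORmap_tauPL {cov lext : P → List P}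
    (hcov : ∀ e : P, (cov e).Nodup ∧ ∀ x : P, x ∈ cov e ↔ x ⋖ e)
    (hlext : ∀ e : P, IsLinExtListOn {x : P | x < e} (lext e)) (e : P) (g : P → ℝ) :
    ORmap (tauPL e g)
      = (etaPLPerm (lext e) * tPLPerm e * (etaPLPerm (lext e))⁻¹) (ORmap g) := by
  have h : ORmapPerm P * tauPLPerm e
      = etaPLPerm (lext e) * tPLPerm e * (etaPLPerm (lext e))⁻¹ * ORmapPerm P := by
    rw [tauPLPerm_eq_conj hcov hlext e]
    group
  exact DFunLike.congr_fun h g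

end TransferConjugation

section Polytopes

open Function

variable [Fintype P] {f g : P → ℝ} {x y : P}

lemma supAbove_nonneg (hf : ∀ z, 0 ≤ f z) : 0 ≤ supAbove f x := by
  by_cases hx : IsMax x
  · simp [supAbove, hx]
  · obtain ⟨z, -, hz⟩ := (isGreatest_supAbove (f := f) hx).1
    exact hz ▸ hf z

lemma le_supAbove_of_lt (hf : Antitone f) (h : x < y) : f y ≤ supAbove f x := by
  obtain ⟨z, hxz, hzy⟩ := exists_covBy_le_of_lt h
  exact (hf hzy).trans (le_supAbove hxz)

lemma supAbove_le_self (hf : Antitone f) (hf₀ : ∀ z, 0 ≤ f z) : supAbove f x ≤ f x := by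
  by_cases hx : IsMax x
  · simpa [supAbove, hx] using hf₀ x
  · obtain ⟨z, hz, hzx⟩ := (isGreatest_supAbove (f := f) hx).1
    exact hzx ▸ hf hz.le

lemma infBelow_le_one (hf : ∀ z, f z ≤ 1) : infBelow f x ≤ 1 := by
  by_cases hx : IsMin x
  · simp [infBelow, hx]
  · obtain ⟨z, -, hz⟩ := (isLeast_infBelow (f := f) hx).1
    exact hz ▸ hf z

lemma infBelow_le_of_lt (hf : Antitone f) (h : y < x) : infBelow f x ≤ f y := by
  obtain ⟨z, hyz, hzx⟩ := exists_le_covBy_of_lt h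
  exact (infBelow_le hzx).trans (hf hyz)

lemma self_le_infBelow (hf : Antitone f) (hf₁ : ∀ z, f z ≤ 1) : f x ≤ infBelow f x := by
  by_cases hx : IsMin x
  · simpa [infBelow, hx] using hf₁ x
  · obtain ⟨z, hz, hzx⟩ := (isLeast_infBelow (f := f) hx).1
    exact hzx ▸ hf hz.le

lemma ORmap_mem (hg : InChainPolytope P g) : InORPolytope P (ORmap g) := by
  have hchain : ∀ x, ∃ l ∈ maxChainsFrom x, (l.map g).sum = ORmap g x :=
    fun x => (isGreatest_ORmap g x).1
  refine ⟨fun x => ?_, ?_⟩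
  · obtain ⟨l, hl, hsum⟩ := hchain x
    refine hsum ▸ ⟨List.sum_nonneg fun v hv => ?_, hg.2 l (hl.1.imp fun _ _ h => h.lt)⟩
    obtain ⟨a, -, rfl⟩ := List.mem_map.mp hv
    exact hg.1 a
  · let _ : LocallyFiniteOrder P := Fintype.toLocallyFiniteOrder
    refine (antitone_iff_forall_covBy _).mpr fun x z hxz => ?_
    rw [ORmap_eq_add_supAbove g x]
    linarith [le_supAbove (f := ORmap g) hxz, hg.1 x]

lemma ORinv_mem (hf : InORPolytope P f) : InChainPolytope P (ORinv f) := by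
  have hf₀ : ∀ z, 0 ≤ f z := fun z => (hf.1 z).1
  refine ⟨fun x => by rw [ORinv_eq_sub_supAbove]; linarith [supAbove_le_self hf.2 hf₀ (x := x)],
    fun l hl => ?_⟩
  suffices ∀ a l, (a :: l).IsChain (· < ·) → ((a :: l).map (ORinv f)).sum ≤ f a by
    rcases l with _ | ⟨a, l⟩
    · simp
    · exact (this a l hl).trans (hf.1 a).2
  intro a l hl
  induction l generalizing a with
  | nil =>
    simp only [List.map_cons, List.map_nil, List.sum_cons, List.sum_nil, add_zero,
      ORinv_eq_sub_supAbove]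
    linarith [supAbove_nonneg hf₀ (x := a)]
  | cons b l ih =>
    obtain ⟨hab, hl⟩ := List.isChain_cons_cons.mp hl
    have := ih b hl
    simp only [List.map_cons, List.sum_cons, ORinv_eq_sub_supAbove] at this ⊢
    linarith [le_supAbove_of_lt hf.2 hab]

lemma tPL_mem (hf : InORPolytope P f) (e : P) : InORPolytope P (tPL e f) := by
  have hf₀ : ∀ z, 0 ≤ f z := fun z => (hf.1 z).1
  have hf₁ : ∀ z, f z ≤ 1 := fun z => (hf.1 z).2
  have hU := supAbove_le_self hf.2 hf₀ (x := e)
  have hL := self_le_infBelow hf.2 hf₁ (x := e)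
  rw [tPL_eq_update]
  refine ⟨fun x => ?_, fun x y hxy => ?_⟩
  · rcases eq_or_ne x e with rfl | hx
    · rw [update_self]
      constructor <;> linarith [supAbove_nonneg hf₀ (x := x), infBelow_le_one hf₁ (x := x)]
    · rw [update_of_ne hx]
      exact hf.1 x
  · by_cases hx : x = e <;> by_cases hy : y = e
    · rw [hx, hy]
    · have := le_supAbove_of_lt hf.2 (lt_of_le_of_ne (hx ▸ hxy) (Ne.symm hy))
      rw [hx, update_self, update_of_ne hy]
      linarith
    · have := infBelow_le_of_lt hf.2 (lt_of_le_of_ne (hy ▸ hxy) hx)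
      rw [hy, update_self, update_of_ne hx]
      linarith
    · rw [update_of_ne hx, update_of_ne hy]
      exact hf.2 hxy

end Polytopes

section ToggleGroups

open Function

lemma Function.Semiconj.perm_inv {α β : Type*} {f : α → β} {σ : Equiv.Perm α}
    {σ' : Equiv.Perm β} (h : Semiconj f σ σ') : Semiconj f ⇑σ⁻¹ ⇑σ'⁻¹ :=
  h.inverses_right σ.apply_symm_apply σ'.symm_apply_apply

lemma Function.Semiconj.list_prod_map {α β ι : Type*} {f : α → β} {F : ι → Equiv.Perm α}
    {F' : ι → Equiv.Perm β} (h : ∀ i, Semiconj f (F i) (F' i)) (l : List ι) :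
    Semiconj f ⇑(l.map F).prod ⇑(l.map F').prod := by
  induction l with
  | nil => exact Semiconj.id_right
  | cons i l ih => exact (h i).comp_right ih

lemma list_prod_map_mem_closure_range {G ι : Type*} [Group G] (t : ι → G) (l : List ι) :
    (l.map t).prod ∈ Subgroup.closure (Set.range t) :=
  list_prod_mem fun _ hx => by
    obtain ⟨a, -, rfl⟩ := List.mem_map.mp hx
    exact Subgroup.subset_closure ⟨a, rfl⟩

variable [Fintype P]

lemma semiconj_val_tORPerm (e : P) : Semiconj Subtype.val (tORPerm e) (tPLPerm e) :=
  fun f => by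
    change (tORSub e f).1 = tPL e f.1
    rw [tORSub, dif_pos (tPL_mem f.2 e)]

lemma semiconj_val_etaORPerm_conj (l : List P) (e : P) :
    Semiconj Subtype.val ⇑(etaORPerm l * tORPerm e * (etaORPerm l)⁻¹)
      ⇑(etaPLPerm l * tPLPerm e * (etaPLPerm l)⁻¹) :=
  have hη := Semiconj.list_prod_map semiconj_val_tORPerm l
  (hη.comp_right (semiconj_val_tORPerm e)).comp_right hη.perm_inv

variable {cov lext : P → List P}

/- Invariance of `C(P)` under `τ_e` is transported, through `ORmap_tauPL`, from the invariance
of `OR(P)` under the toggles `t_x`. -/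
lemma tauPL_mem (hcov : ∀ e : P, (cov e).Nodup ∧ ∀ x : P, x ∈ cov e ↔ x ⋖ e)
    (hlext : ∀ e : P, IsLinExtListOn {x : P | x < e} (lext e)) {g : P → ℝ}
    (hg : InChainPolytope P g) (e : P) : InChainPolytope P (tauPL e g) := by
  rw [← ORinv_ORmap (tauPL e g), ORmap_tauPL hcov hlext,
    ← semiconj_val_etaORPerm_conj (lext e) e ⟨ORmap g, ORmap_mem hg⟩]
  exact ORinv_mem (Subtype.property _)

lemma semiconj_val_tauCPerm (hcov : ∀ e : P, (cov e).Nodup ∧ ∀ x : P, x ∈ cov e ↔ x ⋖ e)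
    (hlext : ∀ e : P, IsLinExtListOn {x : P | x < e} (lext e)) (e : P) :
    Semiconj Subtype.val (tauCPerm e) (tauPLPerm e) :=
  fun g => by
    change (tauCSub e g).1 = tauPL e g.1
    rw [tauCSub, dif_pos ⟨tauPL_mem hcov hlext g.2 e, tauPL_involutive e g.1⟩]

variable (P) in
noncomputable def transferEquiv : CPSub P ≃ ORSub P where
  toFun g := ⟨ORmap g.1, ORmap_mem g.2⟩
  invFun f := ⟨ORinv f.1, ORinv_mem f.2⟩
  left_inv g := Subtype.ext (ORinv_ORmap g.1)
  right_inv f := Subtype.ext (ORmap_ORinv f.1)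

lemma permCongrHom_tauCPerm (hcov : ∀ e : P, (cov e).Nodup ∧ ∀ x : P, x ∈ cov e ↔ x ⋖ e)
    (hlext : ∀ e : P, IsLinExtListOn {x : P | x < e} (lext e)) (e : P) :
    (transferEquiv P).permCongrHom (tauCPerm e)
      = etaORPerm (lext e) * tORPerm e * (etaORPerm (lext e))⁻¹ := by
  refine Equiv.ext fun f => Subtype.ext ?_
  change ORmap (tauCPerm e ⟨ORinv f.1, ORinv_mem f.2⟩).1 = _
  rw [semiconj_val_tauCPerm hcov hlext, semiconj_val_etaORPerm_conj]
  exact (ORmap_tauPL hcov hlext e _).trans (congrArg _ (ORmap_ORinv f.1))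

lemma permCongrHom_coverToggle (hcov : ∀ e : P, (cov e).Nodup ∧ ∀ x : P, x ∈ cov e ↔ x ⋖ e)
    (hlext : ∀ e : P, IsLinExtListOn {x : P | x < e} (lext e)) (e : P) :
    (transferEquiv P).permCongrHom (etaCPerm (cov e) * tauCPerm e * etaCPerm (cov e))
      = tORPerm e := by
  have hC := Semiconj.list_prod_map (semiconj_val_tauCPerm hcov hlext) (cov e)
  have h : Semiconj Subtype.val ⇑(etaCPerm (cov e) * tauCPerm e * etaCPerm (cov e))
      ⇑(((cov e).map tauPLPerm).prod * tauPLPerm e * ((cov e).map tauPLPerm).prod) :=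
    (hC.comp_right (semiconj_val_tauCPerm hcov hlext e)).comp_right hC
  refine Equiv.ext fun f => Subtype.ext ?_
  change ORmap ((etaCPerm (cov e) * tauCPerm e * etaCPerm (cov e)) ⟨ORinv f.1, ORinv_mem f.2⟩).1
    = _
  rw [h, semiconj_val_tORPerm]
  have := DFunLike.congr_fun (ORmapPerm_mul_coverToggle (hcov e).1 (hcov e).2) (ORinv f.1)
  exact this.trans (congrArg (tPLPerm e) (ORmap_ORinv f.1))

lemma map_closure_range_tauCPerm (hcov : ∀ e : P, (cov e).Nodup ∧ ∀ x : P, x ∈ cov e ↔ x ⋖ e)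
    (hlext : ∀ e : P, IsLinExtListOn {x : P | x < e} (lext e)) :
    (Subgroup.closure (Set.range (tauCPerm (P := P)))).map
        ((transferEquiv P).permCongrHom : Equiv.Perm (CPSub P) →* Equiv.Perm (ORSub P))
      = Subgroup.closure (Set.range (tORPerm (P := P))) := by
  apply le_antisymm
  · rw [MonoidHom.map_closure, Subgroup.closure_le]
    rintro _ ⟨_, ⟨e, rfl⟩, rfl⟩
    change (transferEquiv P).permCongrHom (tauCPerm e) ∈ _
    rw [permCongrHom_tauCPerm hcov hlext]
    exact mul_mem (mul_mem (list_prod_map_mem_closure_range _ _)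
      (Subgroup.subset_closure ⟨e, rfl⟩)) (inv_mem (list_prod_map_mem_closure_range _ _))
  · rw [Subgroup.closure_le]
    rintro _ ⟨e, rfl⟩
    rw [← permCongrHom_coverToggle hcov hlext]
    exact Subgroup.mem_map_of_mem _
      (mul_mem (mul_mem (list_prod_map_mem_closure_range _ _)
        (Subgroup.subset_closure ⟨e, rfl⟩)) (list_prod_map_mem_closure_range _ _))

end ToggleGroups

/-- `OR ∘ t_e^* = t_e ∘ OR` and `OR ∘ τ_e = τ_e^* ∘ OR` as maps `C(P) → OR(P)`, where
`t_e^* = τ_{e_1} ⋯ τ_{e_k} τ_e τ_{e_1} ⋯ τ_{e_k}` (over the elements `cov e` covered by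
`e`) and `τ_e^* = η_e t_e η_e⁻¹` (with `η_e` the composition of the toggles `t_x` over a
linear extension `lext e` of `{x | x < e}`).  Consequently the map `τ_e ↦ τ_e^*` extends
to a group isomorphism `Tog_C(P) ≃* Tog_OR(P)`, whose inverse sends `t_e ↦ t_e^*`. -/
theorem pl_toggle_commuting_diagrams_and_group_iso
    (P : Type*) [PartialOrder P] [Fintype P]
    (cov : P → List P) (hcov : ∀ e : P, (cov e).Nodup ∧ ∀ x : P, x ∈ cov e ↔ x ⋖ e)
    (lext : P → List P) (hlext : ∀ e : P, IsLinExtListOn {x : P | x < e} (lext e)) :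
    (∀ (e : P) (g : P → ℝ), InChainPolytope P g →
      ORmap ((listComp ((cov e).map tauPL) ∘ tauPL e ∘ listComp ((cov e).map tauPL)) g)
        = tPL e (ORmap g)) ∧
    (∀ (e : P) (g : P → ℝ), InChainPolytope P g →
      ORmap (tauPL e g)
        = (etaPLPerm (lext e) * tPLPerm e * (etaPLPerm (lext e))⁻¹) (ORmap g)) ∧
    ∃ φ : Subgroup.closure (Set.range (tauCPerm (P := P))) ≃*
        Subgroup.closure (Set.range (tORPerm (P := P))),
      (∀ e : P,
        (φ ⟨tauCPerm e, Subgroup.subset_closure ⟨e, rfl⟩⟩ : Equiv.Perm (ORSub P))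
          = etaORPerm (lext e) * tORPerm e * (etaORPerm (lext e))⁻¹) ∧
      (∀ e : P,
        (φ.symm ⟨tORPerm e, Subgroup.subset_closure ⟨e, rfl⟩⟩ : Equiv.Perm (CPSub P))
          = etaCPerm (cov e) * tauCPerm e * etaCPerm (cov e)) := by
  refine ⟨fun e g _ => ORmap_coverToggle (hcov e).1 (hcov e).2 g,
    fun e g _ => ORmap_tauPL hcov hlext e g,
    ((transferEquiv P).permCongrHom.subgroupMap _).trans
      (MulEquiv.subgroupCongr (map_closure_range_tauCPerm hcov hlext)),
    fun e => permCongrHom_tauCPerm hcov hlext e, fun e => ?_⟩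
  change (transferEquiv P).permCongrHom.symm (tORPerm e) = _
  rw [← permCongrHom_coverToggle hcov hlext, MulEquiv.symm_apply_apply]
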